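/- Let m ≥ 3 and n ≥ 6 with n ≡ 0 (mod 6) and m ≡ 1 (mod 3). Then ((m-1)/3 + 1/2)·n ≤ γ_{r2}(C_m □ C_n) ≤ ((m+2)/3)·n. -/

import Mathlib

open SimpleGraph Finset

/-- `f` is a `k`-rainbow dominating function of `G`: every vertex with empty label
sees all `k` colors in its open neighborhood. -/
def IsRainbowDominating {V : Type*} (G : SimpleGraph V) (k : ℕ)
    (f : V → Finset (Fin k)) : Prop :=
  ∀ v, f v = ∅ → ∀ c : Fin k, ∃ u, G.Adj v u ∧ c ∈ f u

/-- The `k`-rainbow domination number: the minimum weight of a `k`-rainbow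
dominating function. -/
noncomputable def rainbowDomNum {V : Type*} [Fintype V] (G : SimpleGraph V) (k : ℕ) : ℕ :=
  sInf {w | ∃ f : V → Finset (Fin k), IsRainbowDominating G k f ∧ w = ∑ v, (f v).card}

/-!
Lower bound: a vertex `v` with empty label sees both colours, so
`2 ≤ 2 |f v| + ∑_{u ~ v} |f u|`; summed over column `j` this gives
`2 m ≤ 4 a_j + a_{j-1} + a_{j+1}` for the column weights `a_j`. For `m = 3k + 1` the integers
`c_j = 2 a_j - (2k + 1)` satisfy `4 c_j + c_{j-1} + c_{j+1} ≥ -2`, which forces `∑ c_j ≥ 0`: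
a negative `c_j` is at most `-1`, so the positive parts of its two neighbours add up to at
least `2 |c_j|`.

Upper bound: on the rows `i < 3k` put colour `c` on the cells with `2 i + j ≡ 3 c (mod 6)`.
An empty cell then has residue `r ∉ {0, 3}`, and its neighbours have residues `r ± 1`, `r ± 2`,
which contain both `0` and `3`. The last row, of weight 6 per 6 columns, closes the seam
between rows `3k - 1` and `0`, for a total of `2t · 3k + 6t = (m + 2) n / 3` when `n = 6t`.
-/

lemma isRainbowDominating_univ {V : Type*} (G : SimpleGraph V) (k : ℕ) :
    IsRainbowDominating G k fun _ => univ :=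
  fun _ hv c => absurd (hv ▸ mem_univ c) (notMem_empty c)

lemma rainbowDomNum_le {V : Type*} [Fintype V] {G : SimpleGraph V} {k : ℕ}
    {f : V → Finset (Fin k)} (hf : IsRainbowDominating G k f) :
    rainbowDomNum G k ≤ ∑ v, #(f v) :=
  Nat.sInf_le ⟨f, hf, rfl⟩

lemma exists_isRainbowDominating_weight_eq {V : Type*} [Fintype V] (G : SimpleGraph V)
    (k : ℕ) :
    ∃ f : V → Finset (Fin k),
      IsRainbowDominating G k f ∧ ∑ v, #(f v) = rainbowDomNum G k := by
  obtain ⟨f, hf, hw⟩ := Nat.sInf_mem (⟨_, _, isRainbowDominating_univ G k, rfl⟩ :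
    {w | ∃ f : V → Finset (Fin k), IsRainbowDominating G k f ∧ w = ∑ v, #(f v)}.Nonempty)
  exact ⟨f, hf, hw.symm⟩

lemma cycleGraph_adj_eq_sub_one_or_eq_add_one {n : ℕ} [NeZero n] {u v : Fin n}
    (h : (cycleGraph n).Adj u v) : v = u - 1 ∨ v = u + 1 := by
  obtain _ | _ | n := n
  · exact u.elim0
  · exact (cycleGraph_one_adj h).elim
  · have : v ∈ (cycleGraph (n + 2)).neighborSet u := h
    simpa [cycleGraph_neighborSet] using this

lemma cycleGraph_adj_add_one {n : ℕ} [NeZero n] (hn : 2 ≤ n) (u : Fin n) :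
    (cycleGraph n).Adj u (u + 1) := by
  obtain ⟨n, rfl⟩ : ∃ n', n = n' + 2 := ⟨n - 2, by omega⟩
  simp [cycleGraph_adj]

lemma cycleGraph_adj_sub_one {n : ℕ} [NeZero n] (hn : 2 ≤ n) (u : Fin n) :
    (cycleGraph n).Adj u (u - 1) := by
  simpa using (cycleGraph_adj_add_one hn (u - 1)).symm

theorem sum_nonneg_of_neg_two_le_four_mul_add {G : Type*} [AddGroup G] [Fintype G]
    (c : G → ℤ) (s : G) (h : ∀ j, -2 ≤ 4 * c j + c (j - s) + c (j + s)) :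
    0 ≤ ∑ j, c j := by
  have hpart (j : G) : 2 * max (-c j) 0 ≤ max (c (j - s)) 0 + max (c (j + s)) 0 := by
    have := h j
    omega
  have hsum := sum_le_sum fun j (_ : j ∈ univ) => hpart j
  have hleft : ∑ j, max (c (j - s)) 0 = ∑ j, max (c j) 0 :=
    (Equiv.subRight s).sum_comp fun j => max (c j) 0
  have hright : ∑ j, max (c (j + s)) 0 = ∑ j, max (c j) 0 :=
    Equiv.sum_comp (Equiv.addRight s) fun j => max (c j) 0
  rw [← mul_sum, sum_add_distrib, hleft, hright] at hsum
  have hsplit : ∑ j, c j = ∑ j, max (c j) 0 - ∑ j, max (-c j) 0 := by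
    rw [← sum_sub_distrib]
    exact sum_congr rfl fun j _ => by omega
  linarith

def columnWeight {m n : ℕ} (f : Fin m × Fin n → Finset (Fin 2)) (j : Fin n) : ℕ :=
  ∑ i, #(f (i, j))

lemma sum_columnWeight {m n : ℕ} (f : Fin m × Fin n → Finset (Fin 2)) :
    ∑ j, columnWeight f j = ∑ v, #(f v) := by
  rw [Fintype.sum_prod_type, sum_comm]
  rfl

namespace IsRainbowDominating

variable {m n : ℕ} [NeZero m] [NeZero n] {f : Fin m × Fin n → Finset (Fin 2)}

lemma two_le_two_mul_card_add_card_nbrs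
    (hf : IsRainbowDominating (cycleGraph m □ cycleGraph n) 2 f) (i : Fin m) (j : Fin n) :
    2 ≤ 2 * #(f (i, j)) + #(f (i - 1, j)) + #(f (i + 1, j)) + #(f (i, j - 1))
      + #(f (i, j + 1)) := by
  rcases (f (i, j)).eq_empty_or_nonempty with h | h
  · have hcover : univ ⊆ f (i - 1, j) ∪ f (i + 1, j) ∪ f (i, j - 1) ∪ f (i, j + 1) := by
      intro c _
      obtain ⟨⟨i', j'⟩, hadj, hc⟩ := hf (i, j) h c
      simp only [mem_union]
      rcases boxProd_adj.1 hadj with ⟨hi, rfl⟩ | ⟨hj, rfl⟩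
      · rcases cycleGraph_adj_eq_sub_one_or_eq_add_one hi with rfl | rfl <;> simp [hc]
      · rcases cycleGraph_adj_eq_sub_one_or_eq_add_one hj with rfl | rfl <;> simp [hc]
    have hcard := card_le_card hcover
    rw [card_univ, Fintype.card_fin] at hcard
    have := card_union_le (f (i - 1, j) ∪ f (i + 1, j) ∪ f (i, j - 1)) (f (i, j + 1))
    have := card_union_le (f (i - 1, j) ∪ f (i + 1, j)) (f (i, j - 1))
    have := card_union_le (f (i - 1, j)) (f (i + 1, j))
    omega
  · have := h.card_pos
    omega

lemma two_mul_le_columnWeight (hf : IsRainbowDominating (cycleGraph m □ cycleGraph n) 2 f)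
    (j : Fin n) :
    2 * m ≤ 4 * columnWeight f j + columnWeight f (j - 1) + columnWeight f (j + 1) := by
  have hdown : ∑ i, #(f (i - 1, j)) = columnWeight f j :=
    (Equiv.subRight 1).sum_comp fun i => #(f (i, j))
  have hup : ∑ i, #(f (i + 1, j)) = columnWeight f j :=
    Equiv.sum_comp (Equiv.addRight 1) fun i => #(f (i, j))
  calc 2 * m = ∑ _i : Fin m, 2 := by simp [mul_comm]
    _ ≤ ∑ i, (2 * #(f (i, j)) + #(f (i - 1, j)) + #(f (i + 1, j)) + #(f (i, j - 1))
          + #(f (i, j + 1))) := sum_le_sum fun i _ => hf.two_le_two_mul_card_add_card_nbrs i j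
    _ = _ := by
      simp only [sum_add_distrib, ← mul_sum, hdown, hup]
      unfold columnWeight
      ring

theorem mul_le_two_mul_weight (hf : IsRainbowDominating (cycleGraph m □ cycleGraph n) 2 f)
    {k : ℕ} (hk : 3 * k + 1 ≤ m) : n * (2 * k + 1) ≤ 2 * ∑ v, #(f v) := by
  have key := sum_nonneg_of_neg_two_le_four_mul_add
    (fun j => 2 * (columnWeight f j : ℤ) - (2 * k + 1)) 1 fun j => by
      have := hf.two_mul_le_columnWeight j
      omega
  have hweight : ∑ j, (columnWeight f j : ℤ) = ∑ v, #(f v) := by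
    exact_mod_cast sum_columnWeight f
  rw [sum_sub_distrib, ← mul_sum, hweight] at key
  simp only [sum_const, card_univ, Fintype.card_fin, nsmul_eq_mul] at key
  zify
  push_cast at key
  linarith

end IsRainbowDominating

theorem Function.Periodic.sum_range_mul {M : Type*} [AddCommMonoid M] {g : ℕ → M} {p : ℕ}
    (hg : Function.Periodic g p) (t : ℕ) :
    ∑ j ∈ range (t * p), g j = t • ∑ j ∈ range p, g j := by
  induction t with
  | zero => simp
  | succ t ih =>
    rw [add_mul, one_mul, sum_range_add, ih, succ_nsmul]
    congr 1
    exact sum_congr rfl fun j _ => by simpa [add_comm] using hg.nat_mul t j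

/-- The labelling of `C_{3k+1} □ C_n` described above; row `3k` is the last row. -/
def gridLabel (k i j : ℕ) : Finset (Fin 2) :=
  {c | i = 3 * k ∧ (j % 3 = 0 ∨ j % 6 = 2 + 3 * c.val) ∨
    i ≠ 3 * k ∧ (2 * i + j) % 6 = 3 * c.val}

lemma mem_gridLabel {k i j : ℕ} {c : Fin 2} : c ∈ gridLabel k i j ↔
    i = 3 * k ∧ (j % 3 = 0 ∨ j % 6 = 2 + 3 * c.val) ∨
      i ≠ 3 * k ∧ (2 * i + j) % 6 = 3 * c.val := by
  simp [gridLabel]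

lemma gridLabel_congr {k i j j' : ℕ} (h : j % 6 = j' % 6) :
    gridLabel k i j = gridLabel k i j' := by
  ext c
  simp only [mem_gridLabel]
  omega

/-- Column `j + 5` stands for column `j - 1`, the labels being `6`-periodic in `j`. -/
lemma mem_gridLabel_nbr_of_eq_empty {k i : ℕ} (j : ℕ) (hi : i ≤ 3 * k)
    (h : gridLabel k i j = ∅) (c : Fin 2) :
    c ∈ gridLabel k (if i = 3 * k then 0 else i + 1) j ∨
    c ∈ gridLabel k (if i = 0 then 3 * k else i - 1) j ∨
    c ∈ gridLabel k i (j + 1) ∨ c ∈ gridLabel k i (j + 5) := by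
  have h0 := eq_empty_iff_forall_notMem.1 h 0
  have h1 := eq_empty_iff_forall_notMem.1 h 1
  have hc := c.isLt
  simp only [mem_gridLabel, Fin.isValue, Fin.val_zero, Fin.val_one] at h0 h1 ⊢
  by_cases hlast : i = 3 * k
  · right; right; right; omega
  rw [if_neg hlast]
  -- the offset from the residue of `(i, j)` to the residue `3 c` selects the neighbour
  have : (3 * c.val + 6 - (2 * i + j) % 6) % 6 ∈ ({1, 2, 4, 5} : Finset ℕ) := by
    simp only [mem_insert, mem_singleton]; omega
  simp only [mem_insert, mem_singleton] at this
  rcases this with h | h | h | h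
  · right; right; left; omega
  · left; omega
  · right; left; split_ifs <;> omega
  · right; right; right; omega

lemma sum_range_six_card_gridLabel (k i : ℕ) :
    ∑ j ∈ range 6, #(gridLabel k i j) = if i = 3 * k then 6 else 2 := by
  split_ifs with h
  · simp only [gridLabel, h, true_and, ne_eq, not_true_eq_false, false_and, or_false]
    decide
  · have hstripe (j : ℕ) :
        gridLabel k i j = ({c | (2 * i % 6 + j) % 6 = 3 * c.val} : Finset (Fin 2)) := by
      ext c
      rw [mem_gridLabel, mem_filter_univ]
      omega
    simp only [hstripe]
    rcases (by omega : 2 * i % 6 = 0 ∨ 2 * i % 6 = 2 ∨ 2 * i % 6 = 4) with h | h | h <;>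
      rw [h] <;> decide

lemma sum_card_gridLabel (k t : ℕ) :
    ∑ v : Fin (3 * k + 1) × Fin (6 * t), #(gridLabel k v.1 v.2) = 6 * t * (k + 1) := by
  have hrow (i : ℕ) :
      ∑ j : Fin (6 * t), #(gridLabel k i j) = if i = 3 * k then 6 * t else 2 * t := by
    have hper : Function.Periodic (fun j => #(gridLabel k i j)) 6 := fun j => by
      simp only [gridLabel_congr (by omega : (j + 6) % 6 = j % 6)]
    rw [Fin.sum_univ_eq_sum_range (fun j => #(gridLabel k i j)), mul_comm, hper.sum_range_mul,
      sum_range_six_card_gridLabel, smul_eq_mul]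
    split_ifs <;> ring
  rw [Fintype.sum_prod_type]
  simp only [hrow]
  rw [Fin.sum_univ_eq_sum_range (fun i => if i = 3 * k then 6 * t else 2 * t), sum_range_succ,
    sum_congr rfl fun i hi => if_neg (by rw [mem_range] at hi; omega)]
  simp only [if_pos, sum_const, card_range, smul_eq_mul]
  ring

theorem isRainbowDominating_gridLabel {k t : ℕ} (hk : 1 ≤ k) (ht : 1 ≤ t) :
    IsRainbowDominating (cycleGraph (3 * k + 1) □ cycleGraph (6 * t)) 2
      fun v => gridLabel k v.1 v.2 := by
  have : NeZero (6 * t) := ⟨by omega⟩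
  rintro ⟨i, j⟩ h c
  have hup : ((i + 1 : Fin (3 * k + 1)) : ℕ) =
      if (i : ℕ) = 3 * k then 0 else (i : ℕ) + 1 := by
    rw [Fin.val_add_one]
    simp only [Fin.ext_iff, Fin.val_last]
  have hdown : ((i - 1 : Fin (3 * k + 1)) : ℕ) = if (i : ℕ) = 0 then 3 * k else i - 1 := by
    rw [Fin.coe_sub_one]
    simp only [Fin.ext_iff, Fin.val_zero]
  have hright : gridLabel k i (j + 1 : Fin (6 * t)) = gridLabel k i (j + 1) := by
    apply gridLabel_congr
    rw [Fin.val_add, Fin.val_one', Nat.mod_eq_of_lt (by omega : 1 < 6 * t),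
      Nat.mod_mod_of_dvd _ (dvd_mul_right 6 t)]
  have hleft : gridLabel k i (j - 1 : Fin (6 * t)) = gridLabel k i (j + 5) := by
    apply gridLabel_congr
    rw [Fin.val_sub, Fin.val_one', Nat.mod_eq_of_lt (by omega : 1 < 6 * t),
      Nat.mod_mod_of_dvd _ (dvd_mul_right 6 t)]
    omega
  rcases mem_gridLabel_nbr_of_eq_empty (j : ℕ) (by omega) h c with hc | hc | hc | hc
  · refine ⟨(i + 1, j), boxProd_adj_left.2 (cycleGraph_adj_add_one (by omega) i), ?_⟩
    simpa only [hup] using hc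
  · refine ⟨(i - 1, j), boxProd_adj_left.2 (cycleGraph_adj_sub_one (by omega) i), ?_⟩
    simpa only [hdown] using hc
  · refine ⟨(i, j + 1), boxProd_adj_right.2 (cycleGraph_adj_add_one (by omega) j), ?_⟩
    simpa only [hright] using hc
  · refine ⟨(i, j - 1), boxProd_adj_right.2 (cycleGraph_adj_sub_one (by omega) j), ?_⟩
    simpa only [hleft] using hc

theorem two_rainbow_dom_cycles_mod1 (m n : ℕ) (hm : 3 ≤ m) (hn : 6 ≤ n)
    (hn6 : n % 6 = 0) (hm3 : m % 3 = 1) :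
    (((m : ℚ) - 1) / 3 + 1 / 2) * n ≤ rainbowDomNum (cycleGraph m □ cycleGraph n) 2 ∧
    (rainbowDomNum (cycleGraph m □ cycleGraph n) 2 : ℚ) ≤ ((m : ℚ) + 2) / 3 * n := by
  obtain ⟨k, rfl⟩ : ∃ k, m = 3 * k + 1 := ⟨m / 3, by omega⟩
  obtain ⟨t, rfl⟩ : ∃ t, n = 6 * t := ⟨n / 6, by omega⟩
  have : NeZero (6 * t) := ⟨by omega⟩
  obtain ⟨f, hf, hw⟩ :=
    exists_isRainbowDominating_weight_eq (cycleGraph (3 * k + 1) □ cycleGraph (6 * t)) 2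
  have hlower := hf.mul_le_two_mul_weight le_rfl
  have hupper := (rainbowDomNum_le (isRainbowDominating_gridLabel (by omega) (by omega))).trans_eq
    (sum_card_gridLabel k t)
  rw [hw] at hlower
  constructor
  · have := (Nat.cast_le (α := ℚ)).2 hlower
    push_cast at this ⊢
    linarith
  · have := (Nat.cast_le (α := ℚ)).2 hupper
    push_cast at this ⊢
    linarith
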